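/- The conductance of the lazy tree-walk Markov chain is at least 1/(4(n+1)). Precisely: let S be a binary tree of height at most n, π(i) = α·2^{n−d_i} the stationary distribution, and for adjacent nodes u (parent) and v (child) let w(u,v) = π(u)/8 = α·2^{n−d_u−3} be the edge weight of the lazy chain. Then for every subset Y of the nodes of S with 0 < π(Y) ≤ 1/2, we have (∑_{i∈Y, j∉Y} w(i,j)) / π(Y) ≥ 1/(4(n+1)). -/

import Mathlib

/-- Edge weights of the lazy tree walk: for `u` the parent of `v`,
w(u,v) = π(u)/8 = α·2^{n−d_u−3}; zero for non-adjacent pairs. -/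
noncomputable def lazyEdgeWeight (n : ℕ) (α : ℝ) (i j : List Bool) : ℝ :=
  if i ≠ [] ∧ j = i.dropLast then α * 2 ^ (n - j.length) / 8
  else if j ≠ [] ∧ i = j.dropLast then α * 2 ^ (n - i.length) / 8
  else 0

/-!
If the root is not in `Y`, cut `Y` at its boundary nodes, the `c ∈ Y` whose parent lies outside `Y`.
The edge from `c` to its parent carries weight `π(c)/4`, while the nodes of `Y` below `c` have mass
at most `(n + 1) π(c)`, because each of the at most `n + 1` levels below `c` carries mass at most
`π(c)`. As every node of `Y` lies below some boundary node, `π(Y) ≤ 4 (n + 1) · cut(Y)`.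
If the root is in `Y`, apply this to the complement: it has mass at least `π(Y)` and the same cut.
-/

open Finset

section
variable {β : Type*}

lemma exists_prefix_mem_dropLast_notMem {Y : Finset (List β)} (hroot : [] ∉ Y) :
    ∀ y ∈ Y, ∃ c ∈ Y, c.dropLast ∉ Y ∧ c <+: y := by
  intro y
  induction y using List.reverseRecOn with
  | nil => exact fun h => absurd h hroot
  | append_singleton l a ih =>
    intro hy
    by_cases hl : l ∈ Y
    · obtain ⟨c, hcY, hc, hcl⟩ := ih hl
      exact ⟨c, hcY, hc, hcl.trans (List.prefix_append l [a])⟩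
    · exact ⟨l ++ [a], hy, by simpa using hl, List.prefix_refl _⟩

variable [DecidableEq β] [Fintype β]

lemma card_filter_prefix_length_le (T : Finset (List β)) (c : List β) (l : ℕ) :
    #{y ∈ T | c <+: y ∧ y.length = l} ≤ Fintype.card β ^ (l - c.length) := by
  calc #{y ∈ T | c <+: y ∧ y.length = l}
      ≤ #((univ : Finset (List.Vector β (l - c.length))).map
          ⟨List.Vector.toList, List.Vector.toList_injective⟩) := by
        refine card_le_card_of_injOn (·.drop c.length) (fun y hy => ?_) fun y₁ hy₁ y₂ hy₂ h => ?_
        · rw [coe_filter] at hy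
          exact mem_map.mpr ⟨⟨y.drop c.length, by simp [hy.2.2]⟩, mem_univ _, rfl⟩
        · rw [coe_filter] at hy₁ hy₂
          rw [← List.prefix_iff_eq_append.mp hy₁.2.1, ← List.prefix_iff_eq_append.mp hy₂.2.1]
          exact congrArg (c ++ ·) h
    _ = Fintype.card β ^ (l - c.length) := by simp

lemma sum_filter_prefix_pow_le {n : ℕ} (T : Finset (List β)) (hT : ∀ y ∈ T, y.length ≤ n)
    (c : List β) :
    ∑ y ∈ T with c <+: y, (Fintype.card β : ℝ) ^ (n - y.length)
      ≤ (n + 1) * (Fintype.card β : ℝ) ^ (n - c.length) := by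
  set q := Fintype.card β
  have hlevel : ∀ l ∈ Icc c.length n,
      ∑ y ∈ T with c <+: y ∧ y.length = l, (q : ℝ) ^ (n - y.length) ≤ (q : ℝ) ^ (n - c.length) := by
    intro l hl
    rw [mem_Icc] at hl
    calc ∑ y ∈ T with c <+: y ∧ y.length = l, (q : ℝ) ^ (n - y.length)
        = #{y ∈ T | c <+: y ∧ y.length = l} * (q : ℝ) ^ (n - l) := by
          rw [sum_congr rfl fun y hy => by rw [(mem_filter.mp hy).2.2], sum_const, nsmul_eq_mul]
      _ ≤ (q : ℝ) ^ (l - c.length) * (q : ℝ) ^ (n - l) := by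
          gcongr; exact_mod_cast card_filter_prefix_length_le T c l
      _ = (q : ℝ) ^ (n - c.length) := by rw [← pow_add]; congr 1; omega
  calc ∑ y ∈ T with c <+: y, (q : ℝ) ^ (n - y.length)
      = ∑ l ∈ Icc c.length n, ∑ y ∈ T with c <+: y ∧ y.length = l, (q : ℝ) ^ (n - y.length) := by
        rw [← sum_fiberwise_of_maps_to (g := List.length) (t := Icc c.length n)]
        · simp [filter_filter]
        · intro y hy
          rw [mem_filter] at hy
          exact mem_Icc.mpr ⟨hy.2.length_le, hT y hy.1⟩
    _ ≤ #(Icc c.length n) • (q : ℝ) ^ (n - c.length) := sum_le_card_nsmul _ _ _ hlevel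
    _ ≤ (n + 1) * (q : ℝ) ^ (n - c.length) := by
        rw [nsmul_eq_mul, Nat.card_Icc]
        gcongr
        exact_mod_cast Nat.sub_le _ _

lemma sum_pow_le_succ_mul_sum_boundary {n : ℕ} {Y : Finset (List β)} (hroot : [] ∉ Y)
    (hY : ∀ y ∈ Y, y.length ≤ n) :
    ∑ y ∈ Y, (Fintype.card β : ℝ) ^ (n - y.length)
      ≤ (n + 1) * ∑ c ∈ Y with c.dropLast ∉ Y, (Fintype.card β : ℝ) ^ (n - c.length) := by
  set g : List β → ℝ := fun y => (Fintype.card β : ℝ) ^ (n - y.length)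
  calc ∑ y ∈ Y, g y
      ≤ ∑ y ∈ Y, ∑ c ∈ Y with c.dropLast ∉ Y ∧ c <+: y, g y := sum_le_sum fun y hy => by
        obtain ⟨c, hcY, hc, hcy⟩ := exists_prefix_mem_dropLast_notMem hroot y hy
        exact single_le_sum (f := fun _ => g y) (fun _ _ => by positivity)
          (mem_filter.mpr ⟨hcY, hc, hcy⟩)
    _ = ∑ c ∈ Y with c.dropLast ∉ Y, ∑ y ∈ Y with c <+: y, g y :=
        sum_comm' fun y c => by simp only [mem_filter]; tauto
    _ ≤ ∑ c ∈ Y with c.dropLast ∉ Y, (n + 1) * g c :=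
        sum_le_sum fun c _ => sum_filter_prefix_pow_le Y hY c
    _ = (n + 1) * ∑ c ∈ Y with c.dropLast ∉ Y, g c := (mul_sum _ _ _).symm

end

lemma lazyEdgeWeight_nonneg {n : ℕ} {α : ℝ} (hα : 0 ≤ α) (i j : List Bool) :
    0 ≤ lazyEdgeWeight n α i j := by
  unfold lazyEdgeWeight
  split_ifs <;> positivity

lemma lazyEdgeWeight_comm (n : ℕ) (α : ℝ) (i j : List Bool) :
    lazyEdgeWeight n α i j = lazyEdgeWeight n α j i := by
  unfold lazyEdgeWeight
  have not_both : ¬ ((i ≠ [] ∧ j = i.dropLast) ∧ (j ≠ [] ∧ i = j.dropLast)) := by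
    rintro ⟨⟨hi, rfl⟩, -, hij⟩
    have := congrArg List.length hij
    simp only [List.length_dropLast] at this
    have := List.length_pos_iff.mpr hi
    omega
  split_ifs <;> first | rfl | tauto

lemma lazyEdgeWeight_dropLast {n : ℕ} (α : ℝ) {c : List Bool} (hc : c ≠ []) (hcn : c.length ≤ n) :
    lazyEdgeWeight n α c c.dropLast = α * 2 ^ (n - c.length) / 4 := by
  have h : n - c.dropLast.length = n - c.length + 1 := by
    have := List.length_pos_iff.mpr hc
    rw [List.length_dropLast]; omega
  rw [lazyEdgeWeight, if_pos ⟨hc, rfl⟩, h, pow_succ]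
  ring

lemma sum_cut_comm (n : ℕ) (α : ℝ) (Y Z : Finset (List Bool)) :
    ∑ i ∈ Y, ∑ j ∈ Z, lazyEdgeWeight n α i j = ∑ i ∈ Z, ∑ j ∈ Y, lazyEdgeWeight n α i j := by
  rw [sum_comm]
  exact sum_congr rfl fun _ _ => sum_congr rfl fun _ _ => lazyEdgeWeight_comm n α _ _

section
variable {n : ℕ} {S Y : Finset (List Bool)} {α : ℝ}

lemma sum_boundary_le_four_mul_cut (hclosed : ∀ l ∈ S, l ≠ [] → l.dropLast ∈ S)
    (hheight : ∀ l ∈ S, l.length ≤ n) (hα : 0 ≤ α) (hYS : Y ⊆ S) (hroot : [] ∉ Y) :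
    ∑ c ∈ Y with c.dropLast ∉ Y, α * 2 ^ (n - c.length)
      ≤ 4 * ∑ i ∈ Y, ∑ j ∈ S \ Y, lazyEdgeWeight n α i j := by
  have hcut_nonneg : ∀ i, 0 ≤ ∑ j ∈ S \ Y, lazyEdgeWeight n α i j := fun i =>
    sum_nonneg fun j _ => lazyEdgeWeight_nonneg hα i j
  rw [mul_sum]
  calc ∑ c ∈ Y with c.dropLast ∉ Y, α * 2 ^ (n - c.length)
      ≤ ∑ c ∈ Y with c.dropLast ∉ Y, 4 * ∑ j ∈ S \ Y, lazyEdgeWeight n α c j :=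
        sum_le_sum fun c hc => by
          obtain ⟨hcY, hparent⟩ := mem_filter.mp hc
          have hc0 : c ≠ [] := by rintro rfl; exact hroot hcY
          have hcS := hYS hcY
          calc α * 2 ^ (n - c.length) = 4 * lazyEdgeWeight n α c c.dropLast := by
                rw [lazyEdgeWeight_dropLast α hc0 (hheight c hcS)]; ring
            _ ≤ 4 * ∑ j ∈ S \ Y, lazyEdgeWeight n α c j := by
                gcongr
                exact single_le_sum (fun j _ => lazyEdgeWeight_nonneg hα c j)
                  (mem_sdiff.mpr ⟨hclosed c hcS hc0, hparent⟩)
    _ ≤ ∑ i ∈ Y, 4 * ∑ j ∈ S \ Y, lazyEdgeWeight n α i j :=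
        sum_le_sum_of_subset_of_nonneg (filter_subset _ _) fun i _ _ =>
          mul_nonneg zero_le_four (hcut_nonneg i)

lemma sum_le_mul_cut_of_root_notMem (hclosed : ∀ l ∈ S, l ≠ [] → l.dropLast ∈ S)
    (hheight : ∀ l ∈ S, l.length ≤ n) (hα : 0 ≤ α) (hYS : Y ⊆ S) (hroot : [] ∉ Y) :
    ∑ i ∈ Y, α * 2 ^ (n - i.length)
      ≤ 4 * (n + 1) * ∑ i ∈ Y, ∑ j ∈ S \ Y, lazyEdgeWeight n α i j := by
  have hboundary : ∑ y ∈ Y, (2 : ℝ) ^ (n - y.length)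
      ≤ (n + 1) * ∑ c ∈ Y with c.dropLast ∉ Y, (2 : ℝ) ^ (n - c.length) := by
    simpa using sum_pow_le_succ_mul_sum_boundary hroot fun y hy => hheight y (hYS hy)
  calc ∑ i ∈ Y, α * 2 ^ (n - i.length)
      ≤ α * ((n + 1) * ∑ c ∈ Y with c.dropLast ∉ Y, (2 : ℝ) ^ (n - c.length)) := by
        rw [← mul_sum]; gcongr
    _ = (n + 1) * ∑ c ∈ Y with c.dropLast ∉ Y, α * 2 ^ (n - c.length) := by
        rw [mul_left_comm, mul_sum]
    _ ≤ (n + 1) * (4 * ∑ i ∈ Y, ∑ j ∈ S \ Y, lazyEdgeWeight n α i j) := by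
        gcongr; exact sum_boundary_le_four_mul_cut hclosed hheight hα hYS hroot
    _ = 4 * (n + 1) * ∑ i ∈ Y, ∑ j ∈ S \ Y, lazyEdgeWeight n α i j := by ring

end

theorem conductance_lower_bound_general
    (n : ℕ) (S : Finset (List Bool))
    (hclosed : ∀ l ∈ S, l ≠ [] → l.dropLast ∈ S)
    (hheight : ∀ l ∈ S, l.length ≤ n)
    (α : ℝ) (hα : 0 < α)
    (hnorm : ∑ i ∈ S, α * 2 ^ (n - i.length) = 1) :
    ∀ Y ⊆ S,
      0 < ∑ i ∈ Y, α * 2 ^ (n - i.length) →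
      (∑ i ∈ Y, α * 2 ^ (n - i.length)) ≤ 1/2 →
      (∑ i ∈ Y, ∑ j ∈ S \ Y, lazyEdgeWeight n α i j)
        ≥ (∑ i ∈ Y, α * 2 ^ (n - i.length)) / (4 * (n + 1)) := by
  intro Y hYS _ hhalf
  rw [ge_iff_le, div_le_iff₀ (by positivity), mul_comm]
  by_cases hroot : [] ∈ Y
  · calc ∑ i ∈ Y, α * 2 ^ (n - i.length) ≤ ∑ i ∈ S \ Y, α * 2 ^ (n - i.length) := by
          linarith [sum_sdiff hYS (f := fun i : List Bool => α * 2 ^ (n - i.length))]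
      _ ≤ 4 * (n + 1) * ∑ i ∈ S \ Y, ∑ j ∈ S \ (S \ Y), lazyEdgeWeight n α i j :=
          sum_le_mul_cut_of_root_notMem hclosed hheight hα.le sdiff_subset
            fun h => (mem_sdiff.mp h).2 hroot
      _ = 4 * (n + 1) * ∑ i ∈ Y, ∑ j ∈ S \ Y, lazyEdgeWeight n α i j := by
          rw [Finset.sdiff_sdiff_eq_self hYS, sum_cut_comm]
  · exact sum_le_mul_cut_of_root_notMem hclosed hheight hα.le hYS hroot

/-- Conductance lower bound for the lazy tree walk: for every subset `Y` of the
nodes of a binary tree `S` of height at most `n` with 0 < π(Y) ≤ 1/2, the cut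
weight leaving `Y` is at least π(Y)/(4(n+1)); i.e. the conductance is ≥ 1/(4(n+1)). -/
theorem conductance_lower_bound
    (n : ℕ) (S : Finset (List Bool)) (hroot : [] ∈ S)
    (hclosed : ∀ l ∈ S, l ≠ [] → l.dropLast ∈ S)
    (hheight : ∀ l ∈ S, l.length ≤ n)
    (α : ℝ) (hα : 0 < α)
    (hnorm : ∑ i ∈ S, α * 2 ^ (n - i.length) = 1) :
    ∀ Y ⊆ S,
      0 < ∑ i ∈ Y, α * 2 ^ (n - i.length) →
      (∑ i ∈ Y, α * 2 ^ (n - i.length)) ≤ 1/2 →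
      (∑ i ∈ Y, ∑ j ∈ S \ Y, lazyEdgeWeight n α i j)
        ≥ (∑ i ∈ Y, α * 2 ^ (n - i.length)) / (4 * (n + 1)) :=
  conductance_lower_bound_general n S hclosed hheight α hα hnorm
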